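/- Let m ∈ ℕ₀. Suppose S, H₊, H₋ are bounded linear operators on the complex Hilbert space ℓ²(ℕ₀) whose matrix entries with respect to the standard orthonormal basis (e_n) are ⟨S e_k, e_n⟩ = c_{k+n+2m+1}, ⟨H₊ e_k, e_n⟩ = 1/(k+n+m+1/2), and ⟨H₋ e_k, e_n⟩ = 1/(k+n+m+3/2) for all k, n ∈ ℕ₀, where c_j = (2/(π j))·sin(π j/2) for integers j ≥ 1. Then there exists a unitary operator (linear isometric equivalence) U from ℓ²(ℕ₀) onto ℓ²(ℕ₀) × ℓ²(ℕ₀) such that for every x ∈ ℓ²(ℕ₀): U(S x) = ( ((−1)^m/π)·H₊((U x)₁), ((−1)^{m+1}/π)·H₋((U x)₂) ). -/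

import Mathlib

/-!
Since `c_j = 0` for even `j`, the matrix `c_{k+n+2m+1}` of `S` only couples indices of the same
parity, so `S` splits into an even and an odd block. On the even block,
`c_{2a+2b+2m+1} = (-1)^m/π · (-1)^a (-1)^b / (a+b+m+1/2)`, which is the matrix of `(-1)^m/π · H₊`
conjugated by the diagonal unitary `diag((-1)^a)`; the odd block gives `(-1)^(m+1)/π · H₋` in the
same way. Hence `U e_{2a} = ((-1)^a e_a, 0)`, `U e_{2a+1} = (0, (-1)^a e_a)` works: the two sides
are bounded operators with the same matrix entries against Hilbert bases.
-/

open MeasureTheory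

/-- The Fourier coefficients `c_j = (2/(π j))·sin(π j/2)`. -/
noncomputable def cCoef (j : ℕ) : ℝ := (2 / (Real.pi * j)) * Real.sin (Real.pi * j / 2)

/-- The Hilbert space `ℓ²(ℕ₀)` of square-summable complex sequences. -/
noncomputable abbrev l2 := lp (fun _ : ℕ => ℂ) 2

/-- The standard orthonormal basis vectors of `ℓ²(ℕ₀)`. -/
noncomputable def e (n : ℕ) : l2 := lp.single 2 n (1 : ℂ)

open scoped InnerProductSpace

noncomputable section

variable {ι κ 𝕜 E F : Type*} [RCLike 𝕜]
  [NormedAddCommGroup E] [InnerProductSpace 𝕜 E] [NormedAddCommGroup F] [InnerProductSpace 𝕜 F]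

theorem Submodule.orthogonal_span_range_eq_bot {v : ι → E}
    (h : ∀ z, (∀ i, ⟪v i, z⟫_𝕜 = 0) → z = 0) : (span 𝕜 (Set.range v))ᗮ = ⊥ :=
  (Submodule.eq_bot_iff _).2 fun z hz =>
    h z fun i => inner_right_of_mem_orthogonal (subset_span (Set.mem_range_self i)) hz

theorem Orthonormal.smul_of_norm_eq_one {v : ι → E} (hv : Orthonormal 𝕜 v) {u : ι → 𝕜}
    (hu : ∀ i, ‖u i‖ = 1) : Orthonormal 𝕜 fun i => u i • v i :=
  ⟨fun i => by rw [norm_smul, hu, hv.1, one_mul], fun i j hij => by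
    simp only [inner_smul_left, inner_smul_right, hv.2 hij, mul_zero]⟩

theorem Orthonormal.withLpProd {v : ι → E} {w : κ → F} (hv : Orthonormal 𝕜 v)
    (hw : Orthonormal 𝕜 w) :
    Orthonormal 𝕜
      (Sum.elim (fun i => WithLp.toLp 2 (v i, 0)) (fun j => WithLp.toLp 2 (0, w j))) := by
  refine ⟨?_, ?_⟩
  · rintro (i | j) <;> simp [hv.1, hw.1]
  · rintro (i | j) (i' | j') h <;> simp only [Sum.elim_inl, Sum.elim_inr,
      WithLp.prod_inner_apply, inner_zero_left, inner_zero_right, add_zero, zero_add]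
    exacts [hv.2 (ne_of_apply_ne Sum.inl h), hw.2 (ne_of_apply_ne Sum.inr h)]

namespace HilbertBasis

theorem ext_inner_left (b : HilbertBasis ι 𝕜 E) {x y : E} (h : ∀ i, ⟪b i, x⟫_𝕜 = ⟪b i, y⟫_𝕜) :
    x = y :=
  b.repr.injective <| lp.ext <| funext fun i => by simp only [b.repr_apply_apply, h]

theorem ext_inner_right (b : HilbertBasis ι 𝕜 E) {x y : E} (h : ∀ i, ⟪x, b i⟫_𝕜 = ⟪y, b i⟫_𝕜) :
    x = y :=
  b.ext_inner_left fun i => by rw [← inner_conj_symm, h, inner_conj_symm]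

theorem continuousLinearMap_ext (b : HilbertBasis ι 𝕜 E) (b' : HilbertBasis κ 𝕜 F)
    {T T' : E →L[𝕜] F} (h : ∀ i j, ⟪T (b i), b' j⟫_𝕜 = ⟪T' (b i), b' j⟫_𝕜) : T = T' :=
  ContinuousLinearMap.ext_on (Submodule.dense_iff_topologicalClosure_eq_top.2 b.dense_span) <| by
    rintro _ ⟨i, rfl⟩
    exact b'.ext_inner_right (h i)

variable [CompleteSpace E] [CompleteSpace F]

protected def reindex (b : HilbertBasis ι 𝕜 E) (σ : ι ≃ κ) : HilbertBasis κ 𝕜 E :=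
  HilbertBasis.mk (b.orthonormal.comp _ σ.symm.injective)
    (by rw [EquivLike.range_comp]; exact b.dense_span.ge)

@[simp]
theorem reindex_apply (b : HilbertBasis ι 𝕜 E) (σ : ι ≃ κ) (k : κ) :
    b.reindex σ k = b (σ.symm k) := by
  rw [HilbertBasis.reindex, HilbertBasis.coe_mk, Function.comp_apply]

protected def unitSMul (b : HilbertBasis ι 𝕜 E) (u : ι → 𝕜) (hu : ∀ i, ‖u i‖ = 1) :
    HilbertBasis ι 𝕜 E :=
  HilbertBasis.mkOfOrthogonalEqBot (b.orthonormal.smul_of_norm_eq_one hu) <|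
    Submodule.orthogonal_span_range_eq_bot fun z hz => b.ext_inner_left fun i => by
      have hu0 : u i ≠ 0 := norm_ne_zero_iff.1 (by rw [hu]; exact one_ne_zero)
      simpa [inner_smul_left, hu0] using hz i

@[simp]
theorem unitSMul_apply (b : HilbertBasis ι 𝕜 E) (u : ι → 𝕜) (hu : ∀ i, ‖u i‖ = 1) (i : ι) :
    b.unitSMul u hu i = u i • b i := by
  rw [HilbertBasis.unitSMul, HilbertBasis.coe_mkOfOrthogonalEqBot]

protected def prod (b₁ : HilbertBasis ι 𝕜 E) (b₂ : HilbertBasis κ 𝕜 F) :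
    HilbertBasis (ι ⊕ κ) 𝕜 (WithLp 2 (E × F)) :=
  HilbertBasis.mkOfOrthogonalEqBot (b₁.orthonormal.withLpProd b₂.orthonormal)
    (Submodule.orthogonal_span_range_eq_bot fun z hz => by
      have h₁ : z.fst = 0 := b₁.ext_inner_left fun i => by simpa using hz (.inl i)
      have h₂ : z.snd = 0 := b₂.ext_inner_left fun j => by simpa using hz (.inr j)
      rw [WithLp.ext_iff]; ext <;> simp [h₁, h₂])

@[simp]
theorem prod_apply_inl (b₁ : HilbertBasis ι 𝕜 E) (b₂ : HilbertBasis κ 𝕜 F) (i : ι) :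
    b₁.prod b₂ (.inl i) = WithLp.toLp 2 (b₁ i, 0) := by
  rw [HilbertBasis.prod, HilbertBasis.coe_mkOfOrthogonalEqBot, Sum.elim_inl]

@[simp]
theorem prod_apply_inr (b₁ : HilbertBasis ι 𝕜 E) (b₂ : HilbertBasis κ 𝕜 F) (j : κ) :
    b₁.prod b₂ (.inr j) = WithLp.toLp 2 (0, b₂ j) := by
  rw [HilbertBasis.prod, HilbertBasis.coe_mkOfOrthogonalEqBot, Sum.elim_inr]

end HilbertBasis

end

section withLpProdMap

variable {𝕜 E E' F F' : Type*} [RCLike 𝕜] (p : ENNReal)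
  [NormedAddCommGroup E] [NormedSpace 𝕜 E] [NormedAddCommGroup E'] [NormedSpace 𝕜 E']
  [NormedAddCommGroup F] [NormedSpace 𝕜 F] [NormedAddCommGroup F'] [NormedSpace 𝕜 F']

noncomputable def ContinuousLinearMap.withLpProdMap (A : E →L[𝕜] E') (B : F →L[𝕜] F') :
    WithLp p (E × F) →L[𝕜] WithLp p (E' × F') :=
  (WithLp.prodContinuousLinearEquiv p 𝕜 E' F').symm.toContinuousLinearMap ∘L A.prodMap B ∘L
    (WithLp.prodContinuousLinearEquiv p 𝕜 E F).toContinuousLinearMap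

@[simp]
theorem ContinuousLinearMap.ofLp_withLpProdMap (A : E →L[𝕜] E') (B : F →L[𝕜] F')
    (z : WithLp p (E × F)) : (A.withLpProdMap p B z).ofLp = (A z.fst, B z.snd) :=
  rfl

end withLpProdMap

theorem cCoef_two_mul (N : ℕ) : cCoef (2 * N) = 0 := by
  have h : Real.pi * (2 * N : ℕ) / 2 = N * Real.pi := by push_cast; ring
  rw [cCoef, h, Real.sin_nat_mul_pi, mul_zero]

theorem cCoef_two_mul_add_one (N : ℕ) :
    cCoef (2 * N + 1) = (-1) ^ N / Real.pi * (1 / (N + 1 / 2)) := by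
  have h : Real.pi * (2 * N + 1 : ℕ) / 2 = Real.pi / 2 + N * Real.pi := by push_cast; ring
  rw [cCoef, h, Real.sin_add_nat_mul_pi, Real.sin_pi_div_two, mul_one]
  push_cast
  field_simp

noncomputable def l2Basis : HilbertBasis ℕ ℂ l2 :=
  HilbertBasis.ofRepr (LinearIsometryEquiv.refl ℂ l2)

theorem l2Basis_apply (n : ℕ) : l2Basis n = e n :=
  (l2Basis.repr_symm_single n).symm

noncomputable def evenOddBasis : HilbertBasis ℕ ℂ (WithLp 2 (l2 × l2)) :=
  let signed := l2Basis.unitSMul (fun n => (-1) ^ n) (by simp)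
  (signed.prod signed).reindex Equiv.natSumNatEquivNat

theorem evenOddBasis_two_mul (a : ℕ) :
    evenOddBasis (2 * a) = WithLp.toLp 2 ((-1 : ℂ) ^ a • e a, 0) := by
  rw [evenOddBasis, HilbertBasis.reindex_apply,
    show 2 * a = Equiv.natSumNatEquivNat (.inl a) from rfl, Equiv.symm_apply_apply,
    HilbertBasis.prod_apply_inl, HilbertBasis.unitSMul_apply, l2Basis_apply]

theorem evenOddBasis_two_mul_add_one (a : ℕ) :
    evenOddBasis (2 * a + 1) = WithLp.toLp 2 (0, (-1 : ℂ) ^ a • e a) := by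
  rw [evenOddBasis, HilbertBasis.reindex_apply,
    show 2 * a + 1 = Equiv.natSumNatEquivNat (.inr a) from rfl, Equiv.symm_apply_apply,
    HilbertBasis.prod_apply_inr, HilbertBasis.unitSMul_apply, l2Basis_apply]

theorem inner_withLpProdMap_evenOddBasis (m : ℕ) (Hp Hm : l2 →L[ℂ] l2)
    (hHp : ∀ k n : ℕ, ⟪Hp (e k), e n⟫_ℂ = ((1 / ((k : ℝ) + n + m + 1 / 2) : ℝ) : ℂ))
    (hHm : ∀ k n : ℕ, ⟪Hm (e k), e n⟫_ℂ = ((1 / ((k : ℝ) + n + m + 3 / 2) : ℝ) : ℂ)) (k n : ℕ) :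
    ⟪((((-1 : ℝ) ^ m / Real.pi : ℝ) : ℂ) • Hp).withLpProdMap 2
        ((((-1 : ℝ) ^ (m + 1) / Real.pi : ℝ) : ℂ) • Hm) (evenOddBasis k), evenOddBasis n⟫_ℂ =
      ((cCoef (k + n + 2 * m + 1) : ℝ) : ℂ) := by
  rcases Nat.even_or_odd' k with ⟨a, rfl | rfl⟩ <;>
    rcases Nat.even_or_odd' n with ⟨b, rfl | rfl⟩ <;>
    simp only [evenOddBasis_two_mul, evenOddBasis_two_mul_add_one, WithLp.prod_inner_apply,
      ContinuousLinearMap.ofLp_withLpProdMap, WithLp.toLp_fst, WithLp.toLp_snd, map_zero,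
      smul_apply, map_smul, inner_zero_left, inner_zero_right, inner_smul_left,
      inner_smul_right, hHp, hHm, add_zero, zero_add, mul_zero, Complex.conj_ofReal, map_pow,
      map_neg, map_one]
  · rw [show 2 * a + 2 * b + 2 * m + 1 = 2 * (a + b + m) + 1 by ring, cCoef_two_mul_add_one]
    push_cast
    ring
  · rw [show 2 * a + (2 * b + 1) + 2 * m + 1 = 2 * (a + b + m + 1) by ring, cCoef_two_mul,
      Complex.ofReal_zero]
  · rw [show 2 * a + 1 + 2 * b + 2 * m + 1 = 2 * (a + b + m + 1) by ring, cCoef_two_mul,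
      Complex.ofReal_zero]
  · rw [show 2 * a + 1 + (2 * b + 1) + 2 * m + 1 = 2 * (a + b + m + 1) + 1 by ring,
      cCoef_two_mul_add_one]
    push_cast
    ring

theorem stmt_11 (m : ℕ) (S Hp Hm : l2 →L[ℂ] l2)
    (hS : ∀ k n : ℕ, @inner ℂ _ _ (S (e k)) (e n) = ((cCoef (k + n + 2 * m + 1) : ℝ) : ℂ))
    (hHp : ∀ k n : ℕ,
      @inner ℂ _ _ (Hp (e k)) (e n) = ((1 / ((k : ℝ) + n + m + 1 / 2) : ℝ) : ℂ))
    (hHm : ∀ k n : ℕ,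
      @inner ℂ _ _ (Hm (e k)) (e n) = ((1 / ((k : ℝ) + n + m + 3 / 2) : ℝ) : ℂ)) :
    ∃ U : l2 ≃ₗᵢ[ℂ] WithLp 2 (l2 × l2),
      ∀ x : l2,
        WithLp.equiv 2 (l2 × l2) (U (S x)) =
          ((((-1 : ℝ) ^ m / Real.pi : ℝ) : ℂ) • Hp ((WithLp.equiv 2 (l2 × l2) (U x)).1),
            (((-1 : ℝ) ^ (m + 1) / Real.pi : ℝ) : ℂ) • Hm ((WithLp.equiv 2 (l2 × l2) (U x)).2)) := by
  let U := evenOddBasis.repr.symm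
  have hU (k : ℕ) : U (e k) = evenOddBasis k := evenOddBasis.repr_symm_single k
  have hUS : (U : l2 →L[ℂ] WithLp 2 (l2 × l2)) ∘L S =
      ((((-1 : ℝ) ^ m / Real.pi : ℝ) : ℂ) • Hp).withLpProdMap 2
        ((((-1 : ℝ) ^ (m + 1) / Real.pi : ℝ) : ℂ) • Hm) ∘L (U : l2 →L[ℂ] WithLp 2 (l2 × l2)) := by
    refine l2Basis.continuousLinearMap_ext evenOddBasis fun k n => ?_
    simp only [ContinuousLinearMap.comp_apply, l2Basis_apply]
    rw [← hU n, LinearIsometryEquiv.coe_coe'', U.inner_map_map, hU, hU,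
      inner_withLpProdMap_evenOddBasis m Hp Hm hHp hHm, hS]
  exact ⟨U, fun x => congrArg WithLp.ofLp (DFunLike.congr_fun hUS x)⟩
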